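/- arXiv:1906.06303 — 2 statements merged into one kernel-verified Lean document; each statement's English description precedes it below -/
import Mathlib

section
/- Let d ≥ 1 and let E ⊆ ℝ^d be measurable with finite Lebesgue measure. Then Ĥ^0_R(E) is monotonically non-increasing with respect to R ∈ (0,∞), and lim_{R→+∞} Ĥ^0_R(E) = H^0_1(E) + J^0_1(E) as elements of (−∞,+∞]. (The common value is denoted Ĥ^0(E) and called the 0-fractional perimeter of E.) -/
/-! Let `T_ρ(E) = ∫_E ∫_{E ∖ B_ρ(x)} |x - y|^{-d} dy dx` be the tail energy, so that
`J^0_1(E) = -T_1(E)`. For `r ≤ R`, enlarging `B_r(x)` to `B_R(x)` moves the part of the annulus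
`B_R(x) ∖ B_r(x)` outside `E` into the inner integral of `H^0`, and the part inside `E` out of that
of `T`. Since `∫_{B_R ∖ B_r} |z|^{-d} dz = d ω_d log (R / r)` in polar coordinates,
`H^0_R + T_r = H^0_r + T_R + d ω_d log (R / r) |E|`, hence `Ĥ^0_R(E) = H^0_1(E) + J^0_1(E) + T_R(E)`
for every `R > 0`. Finally `T_R(E)` is antitone in `R` and at most `R^{-d} |E|²`. -/

open MeasureTheory Metric Filter Topology ENNReal
open scoped symmDiff

noncomputable section

abbrev Rd (d : ℕ) := EuclideanSpace ℝ (Fin d)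

/-- Lebesgue measure of the unit ball in `ℝ^d`. -/
def omegaD (d : ℕ) : ℝ := (volume (ball (0 : Rd d) 1)).toReal

/-- The kernel `|x-y|^{-(d+σ)}`. -/
def kerH (d : ℕ) (σ : ℝ) (x y : Rd d) : ℝ := ‖x - y‖ ^ (-((d : ℝ) + σ))

/-- `H^σ_ρ(E) = ∫_E ∫_{B_ρ(x)∖E} |x-y|^{-(d+σ)} dy dx ∈ [0,+∞]`. -/
def Hfun (d : ℕ) (σ ρ : ℝ) (E : Set (Rd d)) : ℝ≥0∞ :=
  ∫⁻ x in E, ∫⁻ y in ball x ρ \ E, ENNReal.ofReal (kerH d σ x y)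

/-- `J^σ_r(E) = -∫_E ∫_{E∖B_r(x)} |x-y|^{-(d+σ)} dy dx`. -/
def Jfun (d : ℕ) (σ r : ℝ) (E : Set (Rd d)) : ℝ :=
  -∫ x in E, ∫ y in E \ ball x r, kerH d σ x y

/-- The renormalization constant `γ^σ_ρ`. -/
def gam (d : ℕ) (σ ρ : ℝ) : ℝ :=
  if σ = 0 then d * omegaD d * Real.log ρ else d * omegaD d * (1 - ρ ^ (-σ)) / σ

/-- `Ĥ^σ_ρ(E) = H^σ_ρ(E) - γ^σ_ρ |E|`, valued in `(-∞,+∞]` (as an `EReal`). -/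
def Hhat (d : ℕ) (σ ρ : ℝ) (E : Set (Rd d)) : EReal :=
  (Hfun d σ ρ E : EReal) - ((gam d σ ρ * (volume E).toReal : ℝ) : EReal)

theorem setLIntegral_sdiff_add_setLIntegral_sdiff {α : Type*} [MeasurableSpace α]
    {μ : Measure α} (f : α → ℝ≥0∞) {A B E : Set α} (hA : MeasurableSet A)
    (hB : MeasurableSet B) (hE : MeasurableSet E) (hAB : A ⊆ B) :
    ∫⁻ y in B \ E, f y ∂μ + ∫⁻ y in E \ A, f y ∂μ =
      ∫⁻ y in A \ E, f y ∂μ + ∫⁻ y in E \ B, f y ∂μ + ∫⁻ y in B \ A, f y ∂μ := by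
  rw [← lintegral_inter_add_sdiff f (B \ E) hA, ← lintegral_inter_add_sdiff f (E \ A) hB,
    ← lintegral_inter_add_sdiff f (B \ A) hE, show (B \ E) \ A = (B \ A) \ E by grind,
    show (B \ E) ∩ A = A \ E by grind, show (E \ A) ∩ B = (B \ A) ∩ E by grind,
    show (E \ A) \ B = E \ B by grind]
  ring

namespace EReal

theorem add_coe_sub_coe (a : EReal) (x y : ℝ) : a + x - y = a + (x - y : ℝ) := by
  rw [sub_eq_add_neg, add_assoc, ← coe_neg, ← coe_add, ← sub_eq_add_neg]

theorem eq_add_coe_sub_of_add_coe_eq {a b : EReal} {u v : ℝ} (h : a + u = b + v) :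
    a = b + (v - u : ℝ) := by
  rw [← add_coe_sub_coe, ← h, add_sub_cancel_right]

end EReal

section Annulus

variable {F : Type*} [NormedAddCommGroup F] [NormedSpace ℝ F] [Nontrivial F]
  [FiniteDimensional ℝ F] [MeasurableSpace F] [BorelSpace F] (μ : Measure F) [μ.IsAddHaarMeasure]

theorem integral_annulus_norm_rpow_neg_finrank {r R : ℝ} (hr : 0 < r) (hrR : r ≤ R) :
    ∫ z in ball (0 : F) R \ ball 0 r, ‖z‖ ^ (-(Module.finrank ℝ F : ℝ)) ∂μ =
      Module.finrank ℝ F * μ.real (ball 0 1) * Real.log (R / r) := by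
  set n := Module.finrank ℝ F
  have hradial : ∫ z in ball (0 : F) R \ ball 0 r, ‖z‖ ^ (-(n : ℝ)) ∂μ =
      ∫ z, (Set.Ico r R).indicator (fun t => t ^ (-(n : ℝ))) ‖z‖ ∂μ := by
    rw [← integral_indicator (measurableSet_ball.diff measurableSet_ball)]
    congr 1 with z
    simp only [Set.indicator, Set.mem_sdiff, mem_ball_zero_iff, Set.mem_Ico]
    grind
  have hpow : ∀ t ∈ Set.Ico r R, t ^ (n - 1) • t ^ (-(n : ℝ)) = t⁻¹ := by
    intro t ht
    rw [smul_eq_mul, ← Real.rpow_natCast, ← Real.rpow_add (hr.trans_le ht.1),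
      Nat.cast_sub Module.finrank_pos, Nat.cast_one, show (n : ℝ) - 1 + -n = -1 by ring,
      Real.rpow_neg_one]
  have hIoi : Set.Ioi 0 ∩ Set.Ico r R = Set.Ico r R :=
    Set.inter_eq_right.mpr fun t ht => hr.trans_le ht.1
  rw [hradial, integral_fun_norm_addHaar, nsmul_eq_mul, smul_eq_mul]
  simp_rw [← Set.indicator_smul]
  rw [setIntegral_indicator measurableSet_Ico, hIoi, setIntegral_congr_fun measurableSet_Ico hpow,
    integral_Ico_eq_integral_Ioo, ← integral_Ioc_eq_integral_Ioo,
    ← intervalIntegral.integral_of_le hrR, integral_inv_of_pos hr (hr.trans_le hrR), mul_assoc]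

theorem lintegral_annulus_norm_rpow_neg_finrank {r R : ℝ} (hr : 0 < r) (hrR : r ≤ R) :
    ∫⁻ z in ball (0 : F) R \ ball 0 r, ENNReal.ofReal (‖z‖ ^ (-(Module.finrank ℝ F : ℝ))) ∂μ =
      ENNReal.ofReal (Module.finrank ℝ F * μ.real (ball 0 1) * Real.log (R / r)) := by
  have hbound : ∀ z ∈ ball (0 : F) R \ ball 0 r,
      ‖‖z‖ ^ (-(Module.finrank ℝ F : ℝ))‖ ≤ r ^ (-(Module.finrank ℝ F : ℝ)) := by
    intro z hz
    rw [Real.norm_of_nonneg (by positivity)]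
    refine Real.rpow_le_rpow_of_nonpos hr ?_ (by simp)
    simpa using hz.2
  have hint : IntegrableOn (fun z : F => ‖z‖ ^ (-(Module.finrank ℝ F : ℝ)))
      (ball 0 R \ ball 0 r) μ :=
    Measure.integrableOn_of_bounded
      (ne_top_of_le_ne_top measure_ball_lt_top.ne (measure_mono Set.sdiff_subset))
      (by fun_prop : Measurable fun z : F => ‖z‖ ^ (-(Module.finrank ℝ F : ℝ))).aestronglyMeasurable
      (ae_restrict_of_forall_mem (measurableSet_ball.diff measurableSet_ball) hbound)
  rw [← integral_annulus_norm_rpow_neg_finrank μ hr hrR,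
    ofReal_integral_eq_lintegral_ofReal hint (ae_of_all _ fun z => by positivity)]

end Annulus

theorem lintegral_annulus_kerH_zero {d : ℕ} (hd : 1 ≤ d) (x : Rd d) {r R : ℝ} (hr : 0 < r)
    (hrR : r ≤ R) :
    ∫⁻ y in ball x R \ ball x r, ENNReal.ofReal (kerH d 0 x y) =
      ENNReal.ofReal (d * omegaD d * Real.log (R / r)) := by
  obtain ⟨n, rfl⟩ : ∃ n, d = n + 1 := Nat.exists_eq_add_of_le' hd
  have hpre : (x + ·) ⁻¹' (ball x R \ ball x r) = ball (0 : Rd (n + 1)) R \ ball 0 r := by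
    ext z
    simp [dist_eq_norm]
  rw [← (measurePreserving_add_left volume x).setLIntegral_comp_preimage_emb
    (measurableEmbedding_addLeft x), hpre]
  simpa [kerH, omegaD, Measure.real] using
    lintegral_annulus_norm_rpow_neg_finrank (volume : Measure (Rd (n + 1))) hr hrR

section Energies

variable {d : ℕ} {σ : ℝ} {E : Set (Rd d)}

def tailEnergy (d : ℕ) (σ R : ℝ) (E : Set (Rd d)) : ℝ≥0∞ :=
  ∫⁻ x in E, ∫⁻ y in E \ ball x R, ENNReal.ofReal (kerH d σ x y)

theorem measurable_uncurry_kerH : Measurable (Function.uncurry (kerH d σ)) := by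
  unfold kerH
  fun_prop

theorem measurable_setLIntegral_kerH {S : Set (Rd d × Rd d)} (hS : MeasurableSet S) :
    Measurable fun x => ∫⁻ y in Prod.mk x ⁻¹' S, ENNReal.ofReal (kerH d σ x y) := by
  simp_rw [← lintegral_indicator (measurable_prodMk_left hS)]
  exact (measurable_uncurry_kerH.ennreal_ofReal.indicator hS).lintegral_prod_right'

theorem measurable_setLIntegral_ball_sdiff (hE : MeasurableSet E) (ρ : ℝ) :
    Measurable fun x => ∫⁻ y in ball x ρ \ E, ENNReal.ofReal (kerH d σ x y) :=
  measurable_setLIntegral_kerH <|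
    (isOpen_lt (continuous_snd.dist continuous_fst) continuous_const).measurableSet.diff
      (hE.preimage measurable_snd)

theorem measurable_setLIntegral_sdiff_ball (hE : MeasurableSet E) (ρ : ℝ) :
    Measurable fun x => ∫⁻ y in E \ ball x ρ, ENNReal.ofReal (kerH d σ x y) :=
  measurable_setLIntegral_kerH <| (hE.preimage measurable_snd).diff
    (isOpen_lt (continuous_snd.dist continuous_fst) continuous_const).measurableSet

theorem kerH_le_rpow {x y : Rd d} {R : ℝ} (hR : 0 < R) (hσ : 0 ≤ (d : ℝ) + σ)
    (hy : y ∉ ball x R) : kerH d σ x y ≤ R ^ (-((d : ℝ) + σ)) := by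
  refine Real.rpow_le_rpow_of_nonpos hR ?_ (neg_nonpos.mpr hσ)
  simpa [dist_eq_norm, norm_sub_rev] using hy

theorem setLIntegral_sdiff_ball_kerH_le {R : ℝ} (hR : 0 < R) (hσ : 0 ≤ (d : ℝ) + σ)
    (x : Rd d) :
    ∫⁻ y in E \ ball x R, ENNReal.ofReal (kerH d σ x y) ≤
      ENNReal.ofReal (R ^ (-((d : ℝ) + σ))) * volume E :=
  calc ∫⁻ y in E \ ball x R, ENNReal.ofReal (kerH d σ x y)
      ≤ ∫⁻ _ in E \ ball x R, ENNReal.ofReal (R ^ (-((d : ℝ) + σ))) :=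
        setLIntegral_mono measurable_const fun y hy =>
          ENNReal.ofReal_le_ofReal (kerH_le_rpow hR hσ hy.2)
    _ ≤ ENNReal.ofReal (R ^ (-((d : ℝ) + σ))) * volume E := by
        rw [setLIntegral_const]
        exact mul_le_mul_right (measure_mono Set.sdiff_subset) _

theorem tailEnergy_le {R : ℝ} (hR : 0 < R) (hσ : 0 ≤ (d : ℝ) + σ) :
    tailEnergy d σ R E ≤ ENNReal.ofReal (R ^ (-((d : ℝ) + σ))) * volume E * volume E :=
  calc tailEnergy d σ R E
      ≤ ∫⁻ _ in E, ENNReal.ofReal (R ^ (-((d : ℝ) + σ))) * volume E :=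
        lintegral_mono (setLIntegral_sdiff_ball_kerH_le hR hσ)
    _ = _ := setLIntegral_const _ _

theorem tailEnergy_ne_top {R : ℝ} (hR : 0 < R) (hσ : 0 ≤ (d : ℝ) + σ) (hEfin : volume E < ⊤) :
    tailEnergy d σ R E ≠ ⊤ :=
  ne_top_of_le_ne_top (by finiteness) (tailEnergy_le hR hσ)

theorem tailEnergy_antitone : Antitone fun R => tailEnergy d σ R E :=
  fun _ _ hrR => lintegral_mono fun _ =>
    lintegral_mono_set (Set.sdiff_subset_sdiff_right (ball_subset_ball hrR))

theorem tendsto_tailEnergy_atTop (hσ : 0 < (d : ℝ) + σ) (hEfin : volume E < ⊤) :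
    Tendsto (fun R => tailEnergy d σ R E) atTop (𝓝 0) := by
  have hbound : Tendsto
      (fun R : ℝ => ENNReal.ofReal (R ^ (-((d : ℝ) + σ))) * volume E * volume E) atTop (𝓝 0) := by
    have h := ENNReal.tendsto_ofReal (tendsto_rpow_neg_atTop hσ)
    simpa using ENNReal.Tendsto.mul_const (ENNReal.Tendsto.mul_const h (.inr hEfin.ne))
      (.inr hEfin.ne)
  refine tendsto_of_tendsto_of_tendsto_of_le_of_le' tendsto_const_nhds hbound
    (.of_forall fun _ => zero_le) ?_
  filter_upwards [eventually_gt_atTop 0] with R hR using tailEnergy_le hR hσ.le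

theorem Jfun_eq_neg_tailEnergy (hE : MeasurableSet E) (hEfin : volume E < ⊤) {r : ℝ}
    (hr : 0 < r) (hσ : 0 ≤ (d : ℝ) + σ) :
    Jfun d σ r E = -(tailEnergy d σ r E).toReal := by
  have hinner : ∀ x, ∫ y in E \ ball x r, kerH d σ x y =
      (∫⁻ y in E \ ball x r, ENNReal.ofReal (kerH d σ x y)).toReal := fun x =>
    integral_eq_lintegral_of_nonneg_ae (.of_forall fun _ => Real.rpow_nonneg (norm_nonneg _) _)
      (measurable_uncurry_kerH.comp measurable_prodMk_left).aestronglyMeasurable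
  rw [Jfun, tailEnergy, funext hinner, integral_toReal
    (measurable_setLIntegral_sdiff_ball hE r).aemeasurable
    (.of_forall fun x => (setLIntegral_sdiff_ball_kerH_le hr hσ x).trans_lt (by finiteness))]

theorem Hfun_zero_add_tailEnergy (hd : 1 ≤ d) (hE : MeasurableSet E) {r R : ℝ} (hr : 0 < r)
    (hrR : r ≤ R) :
    Hfun d 0 R E + tailEnergy d 0 r E =
      Hfun d 0 r E + tailEnergy d 0 R E +
        ENNReal.ofReal (d * omegaD d * Real.log (R / r)) * volume E := by
  rw [Hfun, Hfun, tailEnergy, tailEnergy, ← setLIntegral_const,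
    ← lintegral_add_left (measurable_setLIntegral_ball_sdiff hE R),
    ← lintegral_add_left (measurable_setLIntegral_ball_sdiff hE r),
    ← lintegral_add_right _ measurable_const]
  refine lintegral_congr fun x => ?_
  rw [setLIntegral_sdiff_add_setLIntegral_sdiff _ measurableSet_ball measurableSet_ball hE
    (ball_subset_ball hrR), lintegral_annulus_kerH_zero hd x hr hrR]

theorem coe_Hfun_zero_add_tailEnergy (hd : 1 ≤ d) (hE : MeasurableSet E) (hEfin : volume E < ⊤)
    {r R : ℝ} (hr : 0 < r) (hrR : r ≤ R) :
    (Hfun d 0 R E : EReal) + ((tailEnergy d 0 r E).toReal : ℝ) =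
      Hfun d 0 r E + ((tailEnergy d 0 R E).toReal +
        d * omegaD d * (volume E).toReal * Real.log (R / r) : ℝ) := by
  have hdσ : (0 : ℝ) ≤ d + 0 := by positivity
  have hlog : 0 ≤ d * omegaD d * Real.log (R / r) :=
    mul_nonneg (mul_nonneg d.cast_nonneg ENNReal.toReal_nonneg)
      (Real.log_nonneg ((one_le_div hr).mpr hrR))
  have hann : ENNReal.ofReal (d * omegaD d * Real.log (R / r)) * volume E ≠ ⊤ := by finiteness
  have h := congrArg ((↑) : ℝ≥0∞ → EReal) (Hfun_zero_add_tailEnergy hd hE hr hrR)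
  rwa [EReal.coe_ennreal_add, EReal.coe_ennreal_add, EReal.coe_ennreal_add,
    ← EReal.coe_ennreal_toReal (tailEnergy_ne_top hr hdσ hEfin),
    ← EReal.coe_ennreal_toReal (tailEnergy_ne_top (hr.trans_le hrR) hdσ hEfin),
    ← EReal.coe_ennreal_toReal hann, ENNReal.toReal_mul, ENNReal.toReal_ofReal hlog,
    add_assoc, ← EReal.coe_add, mul_right_comm _ (Real.log _)] at h

theorem Hhat_zero_eq_add_tailEnergy (hd : 1 ≤ d) (hE : MeasurableSet E) (hEfin : volume E < ⊤)
    {R : ℝ} (hR : 0 < R) :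
    Hhat d 0 R E = (Hfun d 0 1 E : EReal) + (Jfun d 0 1 E : ℝ) + tailEnergy d 0 R E := by
  have hdσ : (0 : ℝ) ≤ d + 0 := by positivity
  set t : ℝ → ℝ := fun ρ => (tailEnergy d 0 ρ E).toReal
  set c : ℝ := d * omegaD d * (volume E).toReal
  have hHfun : (Hfun d 0 R E : EReal) = Hfun d 0 1 E + (t R - t 1 + c * Real.log R : ℝ) := by
    rcases le_total 1 R with h1R | hR1
    · rw [EReal.eq_add_coe_sub_of_add_coe_eq
        (coe_Hfun_zero_add_tailEnergy hd hE hEfin one_pos h1R), div_one]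
      congr 2
      ring
    · rw [EReal.eq_add_coe_sub_of_add_coe_eq
        (coe_Hfun_zero_add_tailEnergy hd hE hEfin hR hR1).symm, one_div, Real.log_inv]
      congr 2
      ring
  rw [Hhat, gam, if_pos rfl, hHfun, EReal.add_coe_sub_coe,
    ← EReal.coe_ennreal_toReal (tailEnergy_ne_top hR hdσ hEfin),
    Jfun_eq_neg_tailEnergy hE hEfin one_pos hdσ, add_assoc, ← EReal.coe_add]
  congr 2
  ring

end Energies

theorem Hhat_zero_tendsto
    (d : ℕ) (hd : 1 ≤ d)
    (E : Set (Rd d)) (hE : MeasurableSet E) (hEfin : volume E < ⊤) :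
    AntitoneOn (fun R => Hhat d 0 R E) (Set.Ioi (0 : ℝ)) ∧
    Tendsto (fun R => Hhat d 0 R E) atTop
      (𝓝 ((Hfun d 0 1 E : EReal) + ((Jfun d 0 1 E : ℝ) : EReal))) := by
  set H : EReal := (Hfun d 0 1 E : EReal) + (Jfun d 0 1 E : ℝ)
  have hHhat : ∀ R : ℝ, 0 < R → Hhat d 0 R E = H + tailEnergy d 0 R E :=
    fun R hR => Hhat_zero_eq_add_tailEnergy hd hE hEfin hR
  refine ⟨fun r hr R hR hrR => ?_, ?_⟩
  · simp only [hHhat r hr, hHhat R hR]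
    gcongr
    exact EReal.coe_ennreal_le_coe_ennreal_iff.mpr (tailEnergy_antitone hrR)
  · have htail : Tendsto (fun R => ((tailEnergy d 0 R E : ℝ≥0∞) : EReal)) atTop (𝓝 0) := by
      have h := (continuous_coe_ennreal_ereal.tendsto 0).comp
        (tendsto_tailEnergy_atTop (by rw [add_zero]; exact Nat.cast_pos.mpr hd) hEfin)
      rwa [EReal.coe_ennreal_zero] at h
    have hadd : ContinuousAt (fun p : EReal × EReal => p.1 + p.2) (H, 0) :=
      EReal.continuousAt_add (.inr (by simp)) (.inr (by simp))
    have := hadd.tendsto.comp (tendsto_const_nhds.prodMk_nhds htail)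
    rw [add_zero] at this
    refine this.congr' ?_
    filter_upwards [eventually_gt_atTop 0] with R hR using (hHhat R hR).symm
end
end

section
/- Let d ≥ 1, σ ∈ (−d,1) and let E ⊆ ℝ^d be measurable with finite Lebesgue measure. Then for all 0 < r₁ < r₂: (i) for every x ∈ ℝ^d, j^σ_{r₁}(x,E) ≥ j^σ_{r₂}(x,E); (ii) Ĵ^σ_{r₁}(E) ≥ Ĵ^σ_{r₂}(E). In particular for every x ∈ ℝ^d the limit j^σ(x,E) := lim_{r→0⁺} j^σ_r(x,E) exists in (−∞,+∞], the limit lim_{r→0⁺} Ĵ^σ_r(E) exists in (−∞,+∞], and lim_{r→0⁺} Ĵ^σ_r(E) = ∫_E j^σ(x,E) dx. -/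
open MeasureTheory Metric Filter Topology ENNReal
open scoped symmDiff

noncomputable section

/-- `Ĵ^σ_r(E) = J^σ_r(E) - γ^σ_r |E|`. -/
def Jhat (d : ℕ) (σ r : ℝ) (E : Set (Rd d)) : ℝ :=
  Jfun d σ r E - gam d σ r * (volume E).toReal

/-- `j^σ_r(x,E) = -∫_{E∖B_r(x)} |x-y|^{-(d+σ)} dy - γ^σ_r`. -/
def jfun (d : ℕ) (σ r : ℝ) (x : Rd d) (E : Set (Rd d)) : ℝ :=
  -(∫ y in E \ ball x r, kerH d σ x y) - gam d σ r

/-- The nonnegative part of an extended real, as an `ℝ≥0∞` (`⊤ ↦ ⊤`). -/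
def eToENN (x : EReal) : ℝ≥0∞ := if x = ⊤ then ⊤ else ENNReal.ofReal x.toReal

/-!
The renormalising constant is the kernel mass of an annulus: polar coordinates give
`∫_{B_{r₂}(x) ∖ B_{r₁}(x)} |x - y|^{-(d+σ)} dy = γ_{r₂} - γ_{r₁}`. Hence
`j_{r₁}(x,E) - j_{r₂}(x,E)` is the kernel mass of the part of that annulus outside `E`, which is
nonnegative, and integrating over `E` (where `Ĵ_r(E) = ∫_E j_r(·,E)`) gives the monotonicity of
`Ĵ_r`. For `r ≤ 1` this reads `j_r(x,E) = j_1(x,E) + m_r(x)`, where `m_r(x)` is the kernel mass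
of `(B_1(x) ∖ B_r(x)) ∖ E` and increases as `r ↓ 0`. Monotone convergence, pointwise and after
integrating over `E`, gives both limits; as `j_1(·,E)` is integrable on `E`, the limit of `Ĵ_r`
is the integral of the positive part minus that of the negative part of `j(·,E)`.
-/

theorem Antitone.tendsto_nhdsGT_zero_iSup_inv {β : Type*} [CompleteLinearOrder β]
    [TopologicalSpace β] [OrderTopology β] {g : ℝ → β} (hg : Antitone g) :
    Tendsto g (𝓝[>] 0) (𝓝 (⨆ n : ℕ, g (n + 1 : ℝ)⁻¹)) := by
  convert hg.tendsto_nhdsGT 0 using 2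
  apply le_antisymm
  · exact iSup_le fun n => le_sSup ⟨_, Set.mem_Ioi.2 (by positivity), rfl⟩
  · refine sSup_le ?_
    rintro _ ⟨r, hr, rfl⟩
    obtain ⟨n, hn⟩ := exists_nat_one_div_lt (Set.mem_Ioi.1 hr)
    exact le_iSup_of_le n (hg (by simpa only [one_div] using hn.le))

theorem EReal.tendsto_coe_add_coe_ennreal {α : Type*} {l : Filter α} (c : ℝ) {g : α → ℝ≥0∞}
    {L : ℝ≥0∞} (hg : Tendsto g l (𝓝 L)) :
    Tendsto (fun a => (c : EReal) + g a) l (𝓝 (c + L)) :=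
  (EReal.continuousAt_add (p := ((c : EReal), (L : EReal))) (.inl (EReal.coe_ne_top c))
    (.inl (EReal.coe_ne_bot c))).tendsto.comp
    (tendsto_const_nhds.prodMk_nhds (EReal.tendsto_coe_ennreal.2 hg))

theorem measurable_setLIntegral_prodMk_preimage {α β : Type*} [MeasurableSpace α]
    [MeasurableSpace β] {ν : Measure β} [SFinite ν] {f : α × β → ℝ≥0∞} (hf : Measurable f)
    {S : Set (α × β)} (hS : MeasurableSet S) :
    Measurable fun a => ∫⁻ b in Prod.mk a ⁻¹' S, f (a, b) ∂ν := by
  convert (hf.indicator hS).lintegral_prod_right' (ν := ν) using 2 with a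
  rw [← lintegral_indicator (measurable_prodMk_left hS)]
  rfl

section Annulus

variable {F : Type*} [NormedAddCommGroup F] [NormedSpace ℝ F] [MeasurableSpace F] [BorelSpace F]
  [FiniteDimensional ℝ F] [Nontrivial F] (μ : Measure F) [μ.IsAddHaarMeasure]

theorem setIntegral_annulus_fun_norm (f : ℝ → ℝ) (x : F) {r₁ r₂ : ℝ} (h₁ : 0 < r₁)
    (h₁₂ : r₁ ≤ r₂) :
    ∫ y in ball x r₂ \ ball x r₁, f ‖x - y‖ ∂μ =
      Module.finrank ℝ F • μ.real (ball 0 1) •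
        ∫ t in r₁..r₂, t ^ (Module.finrank ℝ F - 1) • f t := by
  have hmem : ∀ y, y ∈ ball x r₂ \ ball x r₁ ↔ ‖x - y‖ ∈ Set.Ico r₁ r₂ := fun y => by
    simp only [Set.mem_sdiff, mem_ball, dist_comm y x, dist_eq_norm, Set.mem_Ico, not_lt]
    tauto
  have hIco : Set.Ioi 0 ∩ Set.Ico r₁ r₂ = Set.Ico r₁ r₂ :=
    Set.inter_eq_self_of_subset_right fun t ht => h₁.trans_le ht.1
  calc ∫ y in ball x r₂ \ ball x r₁, f ‖x - y‖ ∂μ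
      = ∫ y, (Set.Ico r₁ r₂).indicator f ‖x - y‖ ∂μ := by
        rw [← integral_indicator (measurableSet_ball.diff measurableSet_ball)]
        congr 1 with y
        by_cases hy : y ∈ ball x r₂ \ ball x r₁
        · rw [Set.indicator_of_mem hy, Set.indicator_of_mem ((hmem y).1 hy)]
        · rw [Set.indicator_of_notMem hy, Set.indicator_of_notMem (mt (hmem y).2 hy)]
    _ = ∫ y, (Set.Ico r₁ r₂).indicator f ‖y‖ ∂μ :=
        integral_sub_left_eq_self (fun y => (Set.Ico r₁ r₂).indicator f ‖y‖) μ x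
    _ = _ := by
        rw [integral_fun_norm_addHaar, ← integral_indicator measurableSet_Ioi]
        have hsmul : (fun t : ℝ => t ^ (Module.finrank ℝ F - 1) • (Set.Ico r₁ r₂).indicator f t) =
            (Set.Ico r₁ r₂).indicator fun t => t ^ (Module.finrank ℝ F - 1) • f t :=
          funext fun t => (Set.indicator_smul_apply _ _ _ t).symm
        rw [hsmul, Set.indicator_indicator, hIco, integral_indicator measurableSet_Ico,
          integral_Ico_eq_integral_Ioo, ← integral_Ioc_eq_integral_Ioo,
          ← intervalIntegral.integral_of_le h₁₂]

end Annulus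

section PositiveNegativeParts

lemma eToENN_coe (a : ℝ) : eToENN a = ENNReal.ofReal a := by
  rw [eToENN, if_neg (EReal.coe_ne_top a), EReal.toReal_coe]

lemma eToENN_add_ofReal_neg (a : ℝ) (ℓ : ℝ≥0∞) :
    eToENN (a + ℓ) + ENNReal.ofReal (-a) = ℓ + ENNReal.ofReal a + eToENN (-(a + ℓ)) := by
  induction ℓ using ENNReal.recTopCoe with
  | top => simp [eToENN]
  | coe m =>
    rw [EReal.coe_nnreal_eq_coe_real, ← EReal.coe_add, ← EReal.coe_neg, eToENN_coe, eToENN_coe,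
      ← ENNReal.ofReal_coe_nnreal, ← ENNReal.toReal_eq_toReal_iff' (by finiteness) (by finiteness)]
    simp only [ENNReal.toReal_add, ENNReal.add_ne_top, ENNReal.ofReal_ne_top, ne_eq,
      not_false_eq_true, and_self, ENNReal.toReal_ofReal', max_def]
    split_ifs <;> linarith

lemma eToENN_neg_add_le (a : ℝ) (ℓ : ℝ≥0∞) :
    eToENN (-(a + ℓ)) ≤ ENNReal.ofReal (-a) := by
  induction ℓ using ENNReal.recTopCoe with
  | top => simp [eToENN]
  | coe m =>
    rw [EReal.coe_nnreal_eq_coe_real, ← EReal.coe_add, ← EReal.coe_neg, eToENN_coe]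
    exact ENNReal.ofReal_le_ofReal (by linarith [m.2])

theorem coe_integral_add_coe_lintegral_eq_lintegral_eToENN_sub {α : Type*} [MeasurableSpace α]
    {μ : Measure α} {c : α → ℝ} (hc : Integrable c μ) {L : α → ℝ≥0∞} (hL : AEMeasurable L μ) :
    ((∫ a, c a ∂μ : ℝ) : EReal) + ((∫⁻ a, L a ∂μ : ℝ≥0∞) : EReal) =
      ((∫⁻ a, eToENN (c a + L a) ∂μ : ℝ≥0∞) : EReal) -
        ((∫⁻ a, eToENN (-(c a + L a)) ∂μ : ℝ≥0∞) : EReal) := by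
  set P := ∫⁻ a, eToENN (c a + L a) ∂μ
  set N := ∫⁻ a, eToENN (-(c a + L a)) ∂μ
  set I := ∫⁻ a, L a ∂μ
  have hPc : ∫⁻ a, ENNReal.ofReal (c a) ∂μ ≠ ⊤ := hc.lintegral_lt_top.ne
  have hNc : ∫⁻ a, ENNReal.ofReal (-c a) ∂μ ≠ ⊤ := hc.neg.lintegral_lt_top.ne
  have hN : N ≠ ⊤ := ne_top_of_le_ne_top hNc (lintegral_mono fun a => eToENN_neg_add_le _ _)
  have key : P + ∫⁻ a, ENNReal.ofReal (-c a) ∂μ = I + ∫⁻ a, ENNReal.ofReal (c a) ∂μ + N := by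
    rw [← lintegral_add_right' (g := fun a => ENNReal.ofReal (-c a)) _
        hc.aemeasurable.neg.ennreal_ofReal, ← lintegral_add_left' hL,
      ← lintegral_add_left' (f := fun a => L a + ENNReal.ofReal (c a))
        (hL.add hc.aemeasurable.ennreal_ofReal)]
    exact lintegral_congr fun a => eToENN_add_ofReal_neg _ _
  rw [integral_eq_lintegral_pos_part_sub_lintegral_neg_part hc]
  by_cases hI : I = ⊤
  · have hP : P = ⊤ := by simpa [hI, hNc] using key
    rw [hI, hP, EReal.coe_ennreal_top, EReal.coe_add_top, EReal.top_sub (by simpa using hN)]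
  · have hP : P ≠ ⊤ := fun hP =>
      ENNReal.add_ne_top.2 ⟨ENNReal.add_ne_top.2 ⟨hI, hPc⟩, hN⟩ (by rw [← key, hP, top_add])
    rw [← EReal.coe_ennreal_toReal hI, ← EReal.coe_ennreal_toReal hP,
      ← EReal.coe_ennreal_toReal hN, ← EReal.coe_add, ← EReal.coe_sub, EReal.coe_eq_coe_iff]
    have := congrArg ENNReal.toReal key
    rw [ENNReal.toReal_add hP hNc, ENNReal.toReal_add (ENNReal.add_ne_top.2 ⟨hI, hPc⟩) hN,
      ENNReal.toReal_add hI hPc] at this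
    linarith

end PositiveNegativeParts

section Kernel

variable {d : ℕ} {σ : ℝ}

lemma kerH_nonneg (x y : Rd d) : 0 ≤ kerH d σ x y :=
  Real.rpow_nonneg (norm_nonneg _) _

lemma measurable_kerH_uncurry : Measurable fun p : Rd d × Rd d => kerH d σ p.1 p.2 :=
  (continuous_fst.sub continuous_snd).norm.measurable.pow_const _

lemma kerH_le_of_notMem_ball (hσ : -(d : ℝ) < σ) {x y : Rd d} {r : ℝ} (hr : 0 < r)
    (hy : y ∉ ball x r) : kerH d σ x y ≤ r ^ (-((d : ℝ) + σ)) := by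
  rw [mem_ball, not_lt, dist_comm, dist_eq_norm] at hy
  exact Real.rpow_le_rpow_of_nonpos hr hy (by linarith)

lemma integrableOn_kerH (hσ : -(d : ℝ) < σ) (x : Rd d) {r : ℝ} (hr : 0 < r) {S : Set (Rd d)}
    (hS : MeasurableSet S) (hSfin : volume S ≠ ⊤) (hSr : S ⊆ (ball x r)ᶜ) :
    IntegrableOn (kerH d σ x) S := by
  refine Measure.integrableOn_of_bounded (M := r ^ (-((d : ℝ) + σ))) hSfin
    (measurable_kerH_uncurry.comp measurable_prodMk_left).aestronglyMeasurable ?_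
  filter_upwards [ae_restrict_mem hS] with y hy
  rw [Real.norm_of_nonneg (kerH_nonneg x y)]
  exact kerH_le_of_notMem_ball hσ hr (hSr hy)

lemma gam_sub_gam {r₁ r₂ : ℝ} (h₁ : 0 < r₁) (h₂ : 0 < r₂) :
    gam d σ r₂ - gam d σ r₁ = d * omegaD d * ∫ t in r₁..r₂, t ^ (-1 - σ) := by
  have h0 : (0 : ℝ) ∉ Set.uIcc r₁ r₂ := Set.notMem_uIcc_of_lt h₁ h₂
  by_cases hσ : σ = 0
  · subst hσ
    simp only [gam, if_true, sub_zero, Real.rpow_neg_one]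
    rw [integral_inv h0, Real.log_div h₂.ne' h₁.ne']
    ring
  · rw [integral_rpow (Or.inr ⟨by contrapose! hσ; linarith, h0⟩)]
    simp only [gam, if_neg hσ, show -1 - σ + 1 = -σ by ring]
    field_simp
    ring

lemma setIntegral_annulus_kerH (hd : 1 ≤ d) (x : Rd d) {r₁ r₂ : ℝ} (h₁ : 0 < r₁)
    (h₁₂ : r₁ ≤ r₂) :
    ∫ y in ball x r₂ \ ball x r₁, kerH d σ x y = gam d σ r₂ - gam d σ r₁ := by
  have : Nontrivial (Rd d) := by
    apply Module.nontrivial_of_finrank_pos (R := ℝ)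
    rw [finrank_euclideanSpace_fin]
    omega
  have hpow : Set.EqOn (fun t : ℝ => t ^ (d - 1) • t ^ (-((d : ℝ) + σ))) (fun t => t ^ (-1 - σ))
      (Set.uIcc r₁ r₂) := by
    intro t ht
    have ht0 : 0 < t := h₁.trans_le (Set.uIcc_of_le h₁₂ ▸ ht).1
    simp only [smul_eq_mul]
    rw [← Real.rpow_natCast, ← Real.rpow_add ht0, Nat.cast_sub hd]
    ring_nf
  change ∫ y in _, (fun t : ℝ => t ^ (-((d : ℝ) + σ))) ‖x - y‖ = _
  rw [setIntegral_annulus_fun_norm volume (fun t => t ^ (-((d : ℝ) + σ))) x h₁ h₁₂,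
    finrank_euclideanSpace_fin, intervalIntegral.integral_congr hpow,
    gam_sub_gam h₁ (h₁.trans_le h₁₂), omegaD, measureReal_def, nsmul_eq_mul, smul_eq_mul]
  ring

end Kernel

section Monotone

variable {d : ℕ} {σ : ℝ} {E : Set (Rd d)}

lemma jfun_eq_jfun_add_setIntegral (hd : 1 ≤ d) (hσ : -(d : ℝ) < σ) (hE : MeasurableSet E)
    (hEfin : volume E < ⊤) (x : Rd d) {r₁ r₂ : ℝ} (h₁ : 0 < r₁) (h₁₂ : r₁ ≤ r₂) :
    jfun d σ r₁ x E = jfun d σ r₂ x E + ∫ y in (ball x r₂ \ ball x r₁) \ E, kerH d σ x y := by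
  have hA : MeasurableSet (ball x r₂ \ ball x r₁) := measurableSet_ball.diff measurableSet_ball
  have hEint : IntegrableOn (kerH d σ x) (E \ ball x r₁) :=
    integrableOn_kerH hσ x h₁ (hE.diff measurableSet_ball)
      ((measure_mono Set.sdiff_subset).trans_lt hEfin).ne fun _ hy => hy.2
  have hAint : IntegrableOn (kerH d σ x) (ball x r₂ \ ball x r₁) :=
    integrableOn_kerH hσ x h₁ hA
      ((measure_mono Set.sdiff_subset).trans_lt measure_ball_lt_top).ne
      fun _ hy => hy.2
  have hsplitE := integral_inter_add_sdiff measurableSet_ball hEint (t := ball x r₂)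
  have hsplitA := integral_inter_add_sdiff hE hAint
  have hout : (E \ ball x r₁) \ ball x r₂ = E \ ball x r₂ := by
    rw [Set.sdiff_sdiff, Set.union_eq_right.2 (ball_subset_ball h₁₂)]
  have hin : (E \ ball x r₁) ∩ ball x r₂ = (ball x r₂ \ ball x r₁) ∩ E := by
    ext y
    simp only [Set.mem_inter_iff, Set.mem_sdiff]
    tauto
  rw [hout, hin] at hsplitE
  have hann := setIntegral_annulus_kerH (σ := σ) hd x h₁ h₁₂
  simp only [jfun]
  linarith

lemma antitoneOn_jfun (hd : 1 ≤ d) (hσ : -(d : ℝ) < σ) (hE : MeasurableSet E)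
    (hEfin : volume E < ⊤) (x : Rd d) :
    AntitoneOn (fun r => jfun d σ r x E) (Set.Ioi 0) := by
  intro r₁ h₁ r₂ _ h₁₂
  dsimp only
  rw [jfun_eq_jfun_add_setIntegral hd hσ hE hEfin x h₁ h₁₂]
  exact le_add_of_nonneg_right
    (setIntegral_nonneg ((measurableSet_ball.diff measurableSet_ball).diff hE)
      fun y _ => kerH_nonneg x y)

lemma measurableSet_snd_mem_ball_fst (r : ℝ) :
    MeasurableSet {p : Rd d × Rd d | p.2 ∈ ball p.1 r} :=
  measurableSet_lt (continuous_snd.dist continuous_fst).measurable measurable_const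

lemma setIntegral_kerH_eq_toReal_setLIntegral (x : Rd d) (S : Set (Rd d)) :
    ∫ y in S, kerH d σ x y = (∫⁻ y in S, ENNReal.ofReal (kerH d σ x y)).toReal :=
  integral_eq_lintegral_of_nonneg_ae (ae_of_all _ (kerH_nonneg x))
    (measurable_kerH_uncurry.comp measurable_prodMk_left).aestronglyMeasurable

lemma measurable_setIntegral_kerH_diff_ball (hE : MeasurableSet E) (r : ℝ) :
    Measurable fun x => ∫ y in E \ ball x r, kerH d σ x y := by
  simp_rw [setIntegral_kerH_eq_toReal_setLIntegral]
  exact (measurable_setLIntegral_prodMk_preimage measurable_kerH_uncurry.ennreal_ofReal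
    ((measurable_snd hE).diff (measurableSet_snd_mem_ball_fst r))).ennreal_toReal

lemma norm_setIntegral_kerH_diff_ball_le (hσ : -(d : ℝ) < σ) (hEfin : volume E < ⊤) {r : ℝ}
    (hr : 0 < r) (x : Rd d) :
    ‖∫ y in E \ ball x r, kerH d σ x y‖ ≤ r ^ (-((d : ℝ) + σ)) * volume.real E := by
  calc ‖∫ y in E \ ball x r, kerH d σ x y‖
      ≤ r ^ (-((d : ℝ) + σ)) * volume.real (E \ ball x r) :=
        norm_setIntegral_le_of_norm_le_const ((measure_mono Set.sdiff_subset).trans_lt hEfin)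
          fun y hy => (Real.norm_of_nonneg (kerH_nonneg x y)).trans_le
            (kerH_le_of_notMem_ball hσ hr hy.2)
    _ ≤ r ^ (-((d : ℝ) + σ)) * volume.real E :=
        mul_le_mul_of_nonneg_left (measureReal_mono Set.sdiff_subset hEfin.ne) (by positivity)

lemma integrableOn_setIntegral_kerH_diff_ball (hσ : -(d : ℝ) < σ) (hE : MeasurableSet E)
    (hEfin : volume E < ⊤) {r : ℝ} (hr : 0 < r) :
    IntegrableOn (fun x => ∫ y in E \ ball x r, kerH d σ x y) E :=
  Measure.integrableOn_of_bounded hEfin.ne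
    (measurable_setIntegral_kerH_diff_ball hE r).aestronglyMeasurable
    (ae_of_all _ (norm_setIntegral_kerH_diff_ball_le hσ hEfin hr))

lemma integrableOn_jfun (hσ : -(d : ℝ) < σ) (hE : MeasurableSet E) (hEfin : volume E < ⊤)
    {r : ℝ} (hr : 0 < r) : IntegrableOn (fun x => jfun d σ r x E) E :=
  (integrableOn_setIntegral_kerH_diff_ball hσ hE hEfin hr).neg.sub (integrableOn_const hEfin.ne)

lemma Jhat_eq_setIntegral_jfun (hσ : -(d : ℝ) < σ) (hE : MeasurableSet E)
    (hEfin : volume E < ⊤) {r : ℝ} (hr : 0 < r) :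
    Jhat d σ r E = ∫ x in E, jfun d σ r x E := by
  simp only [jfun]
  rw [integral_sub (f := fun x => -∫ y in E \ ball x r, kerH d σ x y)
    (integrableOn_setIntegral_kerH_diff_ball hσ hE hEfin hr).neg (integrableOn_const hEfin.ne),
    integral_neg, setIntegral_const, smul_eq_mul, Jhat, Jfun, measureReal_def]
  ring

lemma antitoneOn_Jhat (hd : 1 ≤ d) (hσ : -(d : ℝ) < σ) (hE : MeasurableSet E)
    (hEfin : volume E < ⊤) : AntitoneOn (fun r => Jhat d σ r E) (Set.Ioi 0) := by
  intro r₁ h₁ r₂ h₂ h₁₂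
  simp only [Jhat_eq_setIntegral_jfun hσ hE hEfin h₁, Jhat_eq_setIntegral_jfun hσ hE hEfin h₂]
  exact setIntegral_mono (integrableOn_jfun hσ hE hEfin h₂) (integrableOn_jfun hσ hE hEfin h₁)
    fun x => antitoneOn_jfun hd hσ hE hEfin x h₁ h₂ h₁₂

end Monotone

section Limit

variable {d : ℕ} {σ : ℝ} {E : Set (Rd d)}

def shellMass (d : ℕ) (σ : ℝ) (E : Set (Rd d)) (r : ℝ) (x : Rd d) : ℝ≥0∞ :=
  ∫⁻ y in (ball x 1 \ ball x r) \ E, ENNReal.ofReal (kerH d σ x y)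

-- The supremum is the kernel mass of `(B_1(x) ∖ {x}) ∖ E`.
def jfunLimit (d : ℕ) (σ : ℝ) (x : Rd d) (E : Set (Rd d)) : EReal :=
  (jfun d σ 1 x E : EReal) + (⨆ n : ℕ, shellMass d σ E (n + 1 : ℝ)⁻¹ x : ℝ≥0∞)

lemma shellMass_antitone (x : Rd d) : Antitone fun r => shellMass d σ E r x :=
  fun _ _ h => lintegral_mono_set
    (Set.sdiff_subset_sdiff_left (Set.sdiff_subset_sdiff_right (ball_subset_ball h)))

lemma shellMass_le (hσ : -(d : ℝ) < σ) {r : ℝ} (hr : 0 < r) (x : Rd d) :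
    shellMass d σ E r x ≤ ENNReal.ofReal (r ^ (-((d : ℝ) + σ))) * volume (ball (0 : Rd d) 1) :=
  calc shellMass d σ E r x
      ≤ ∫⁻ _ in (ball x 1 \ ball x r) \ E, ENNReal.ofReal (r ^ (-((d : ℝ) + σ))) :=
        setLIntegral_mono measurable_const fun y hy =>
          ENNReal.ofReal_le_ofReal (kerH_le_of_notMem_ball hσ hr hy.1.2)
    _ ≤ ENNReal.ofReal (r ^ (-((d : ℝ) + σ))) * volume (ball x 1) := by
        rw [setLIntegral_const]
        exact mul_le_mul_right (measure_mono fun y hy => hy.1.1) _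
    _ = _ := by rw [Measure.addHaar_ball_center]

lemma shellMass_lt_top (hσ : -(d : ℝ) < σ) {r : ℝ} (hr : 0 < r) (x : Rd d) :
    shellMass d σ E r x < ⊤ :=
  (shellMass_le hσ hr x).trans_lt (ENNReal.mul_lt_top ENNReal.ofReal_lt_top measure_ball_lt_top)

lemma lintegral_shellMass_lt_top (hσ : -(d : ℝ) < σ) (hEfin : volume E < ⊤) {r : ℝ}
    (hr : 0 < r) : ∫⁻ x in E, shellMass d σ E r x < ⊤ :=
  (setLIntegral_mono measurable_const fun x _ => shellMass_le hσ hr x).trans_lt <| by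
    rw [setLIntegral_const]
    exact ENNReal.mul_lt_top (ENNReal.mul_lt_top ENNReal.ofReal_lt_top measure_ball_lt_top) hEfin

lemma measurable_shellMass (hE : MeasurableSet E) (r : ℝ) :
    Measurable (shellMass d σ E r) :=
  measurable_setLIntegral_prodMk_preimage measurable_kerH_uncurry.ennreal_ofReal
    (((measurableSet_snd_mem_ball_fst 1).diff (measurableSet_snd_mem_ball_fst r)).diff
      (measurable_snd hE))

lemma jfun_eq_jfun_one_add_shellMass (hd : 1 ≤ d) (hσ : -(d : ℝ) < σ) (hE : MeasurableSet E)
    (hEfin : volume E < ⊤) (x : Rd d) {r : ℝ} (hr : 0 < r) (hr₁ : r ≤ 1) :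
    jfun d σ r x E = jfun d σ 1 x E + (shellMass d σ E r x).toReal := by
  rw [shellMass, ← setIntegral_kerH_eq_toReal_setLIntegral]
  exact jfun_eq_jfun_add_setIntegral hd hσ hE hEfin x hr hr₁

lemma Jhat_eq_add_lintegral_shellMass (hd : 1 ≤ d) (hσ : -(d : ℝ) < σ) (hE : MeasurableSet E)
    (hEfin : volume E < ⊤) {r : ℝ} (hr : 0 < r) (hr₁ : r ≤ 1) :
    Jhat d σ r E = (∫ x in E, jfun d σ 1 x E) + (∫⁻ x in E, shellMass d σ E r x).toReal := by
  have hmeas := (measurable_shellMass (σ := σ) hE r).aemeasurable (μ := volume.restrict E)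
  rw [Jhat_eq_setIntegral_jfun hσ hE hEfin hr,
    ← integral_toReal hmeas (ae_of_all _ (shellMass_lt_top hσ hr)),
    ← integral_add (integrableOn_jfun hσ hE hEfin one_pos)
      (integrable_toReal_of_lintegral_ne_top hmeas (lintegral_shellMass_lt_top hσ hEfin hr).ne)]
  exact setIntegral_congr_fun hE fun x _ => jfun_eq_jfun_one_add_shellMass hd hσ hE hEfin x hr hr₁

lemma tendsto_jfun (hd : 1 ≤ d) (hσ : -(d : ℝ) < σ) (hE : MeasurableSet E)
    (hEfin : volume E < ⊤) (x : Rd d) :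
    Tendsto (fun r => (jfun d σ r x E : EReal)) (𝓝[>] 0) (𝓝 (jfunLimit d σ x E)) := by
  refine (EReal.tendsto_coe_add_coe_ennreal _
    (shellMass_antitone x).tendsto_nhdsGT_zero_iSup_inv).congr' ?_
  filter_upwards [Ioc_mem_nhdsGT zero_lt_one] with r hr
  rw [jfun_eq_jfun_one_add_shellMass hd hσ hE hEfin x hr.1 hr.2, EReal.coe_add,
    EReal.coe_ennreal_toReal (shellMass_lt_top hσ hr.1 x).ne]

lemma tendsto_Jhat (hd : 1 ≤ d) (hσ : -(d : ℝ) < σ) (hE : MeasurableSet E)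
    (hEfin : volume E < ⊤) :
    Tendsto (fun r => (Jhat d σ r E : EReal)) (𝓝[>] 0)
      (𝓝 ((∫ x in E, jfun d σ 1 x E : ℝ) +
        ((∫⁻ x in E, ⨆ n : ℕ, shellMass d σ E (n + 1 : ℝ)⁻¹ x : ℝ≥0∞) : EReal))) := by
  have hanti : Antitone fun r => ∫⁻ x in E, shellMass d σ E r x :=
    fun _ _ h => lintegral_mono fun x => shellMass_antitone x h
  have hmono : Monotone fun (n : ℕ) x => shellMass d σ E (n + 1 : ℝ)⁻¹ x :=
    fun m n h x => shellMass_antitone x (inv_anti₀ (by positivity) (by gcongr))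
  have hlim := hanti.tendsto_nhdsGT_zero_iSup_inv
  rw [← lintegral_iSup (fun n => measurable_shellMass hE _) hmono] at hlim
  refine (EReal.tendsto_coe_add_coe_ennreal _ hlim).congr' ?_
  filter_upwards [Ioc_mem_nhdsGT zero_lt_one] with r hr
  rw [Jhat_eq_add_lintegral_shellMass hd hσ hE hEfin hr.1 hr.2, EReal.coe_add,
    EReal.coe_ennreal_toReal (lintegral_shellMass_lt_top hσ hEfin hr.1).ne]

end Limit

theorem j_and_Jhat_monotone_limits_general
    (d : ℕ) (hd : 1 ≤ d) (σ : ℝ) (hσ1 : -(d : ℝ) < σ)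
    (E : Set (Rd d)) (hE : MeasurableSet E) (hEfin : volume E < ⊤) :
    (∀ x : Rd d, AntitoneOn (fun r => jfun d σ r x E) (Set.Ioi (0 : ℝ))) ∧
    AntitoneOn (fun r => Jhat d σ r E) (Set.Ioi (0 : ℝ)) ∧
    ∃ jlim : Rd d → EReal,
      (∀ x : Rd d,
        Tendsto (fun r => ((jfun d σ r x E : ℝ) : EReal)) (𝓝[>] (0 : ℝ)) (𝓝 (jlim x))) ∧
      Tendsto (fun r => ((Jhat d σ r E : ℝ) : EReal)) (𝓝[>] (0 : ℝ))
        (𝓝 (((∫⁻ x in E, eToENN (jlim x)) : ℝ≥0∞)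
          - ((∫⁻ x in E, eToENN (-(jlim x)) : ℝ≥0∞) : EReal))) := by
  refine ⟨antitoneOn_jfun hd hσ1 hE hEfin, antitoneOn_Jhat hd hσ1 hE hEfin,
    fun x => jfunLimit d σ x E, tendsto_jfun hd hσ1 hE hEfin, ?_⟩
  convert tendsto_Jhat hd hσ1 hE hEfin using 2
  exact (coe_integral_add_coe_lintegral_eq_lintegral_eToENN_sub
    (integrableOn_jfun hσ1 hE hEfin one_pos)
    (Measurable.iSup fun n => measurable_shellMass hE _).aemeasurable).symm

theorem j_and_Jhat_monotone_limits
    (d : ℕ) (hd : 1 ≤ d) (σ : ℝ) (hσ1 : -(d : ℝ) < σ) (hσ2 : σ < 1)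
    (E : Set (Rd d)) (hE : MeasurableSet E) (hEfin : volume E < ⊤) :
    (∀ x : Rd d, AntitoneOn (fun r => jfun d σ r x E) (Set.Ioi (0 : ℝ))) ∧
    AntitoneOn (fun r => Jhat d σ r E) (Set.Ioi (0 : ℝ)) ∧
    ∃ jlim : Rd d → EReal,
      (∀ x : Rd d,
        Tendsto (fun r => ((jfun d σ r x E : ℝ) : EReal)) (𝓝[>] (0 : ℝ)) (𝓝 (jlim x))) ∧
      Tendsto (fun r => ((Jhat d σ r E : ℝ) : EReal)) (𝓝[>] (0 : ℝ))
        (𝓝 (((∫⁻ x in E, eToENN (jlim x)) : ℝ≥0∞)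
          - ((∫⁻ x in E, eToENN (-(jlim x)) : ℝ≥0∞) : EReal))) :=
  j_and_Jhat_monotone_limits_general d hd σ hσ1 E hE hEfin
end
end
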